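/- arXiv:1810.08337 — 3 statements merged into one kernel-verified Lean document; each statement's English description precedes it below -/
import Mathlib

section
/- The fOU correlation function C_Z(s) = (1/Γ(2H+1))[(1/2)∫_ℝ e^{−|v|}|s+v|^{2H} dv − s^{2H}] satisfies, for H ∈ (0,1/2), the small-lag expansion C_Z(s) = 1 − s^{2H}/Γ(2H+1) + o(s^{2H}) as s → 0⁺. -/
open MeasureTheory Real Filter Asymptotics

/-- Correlation function of the stationary fractional Ornstein-Uhlenbeck process. -/
noncomputable def fouCorr (H : ℝ) (s : ℝ) : ℝ :=
  (Real.Gamma (2 * H + 1))⁻¹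
    * ((1 / 2) * (∫ v : ℝ, Real.exp (-|v|) * |s + v| ^ (2 * H)) - s ^ (2 * H))

/-! Substituting `v ↦ v - s` moves the lag into the kernel:
`∫ e^{-|v|} |s + v|^{2H} dv = ∫ e^{-|v - s|} |v|^{2H} dv`, and `|e^{-|v - s|} - e^{-|v|}| ≤ 2|s| e^{-|v|}`
for `|s| ≤ 1`. So the integral is within `O(s)` of its value `2Γ(2H+1)` at `s = 0`, i.e.
`C_Z(s) - 1 + s^{2H}/Γ(2H+1) = O(s)`, and `s = o(s^{2H})` as `s → 0⁺` because `2H < 1`. -/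

open Set Topology

theorem integrable_comp_abs_of_integrableOn_Ioi {E : Type*} [NormedAddCommGroup E]
    {f : ℝ → E} (hf : IntegrableOn f (Ioi 0)) : Integrable fun x => f |x| := by
  have h_Ioi : IntegrableOn (fun x => f |x|) (Ioi 0) :=
    hf.congr_fun (fun x hx => by rw [abs_of_pos hx]) measurableSet_Ioi
  have h_Iic : IntegrableOn (fun x => f |x|) (Iic 0) := by
    have hneg : MeasurableEmbedding fun x : ℝ => -x := (Homeomorph.neg ℝ).measurableEmbedding
    rw [← Measure.map_neg_eq_self (volume : Measure ℝ), hneg.integrableOn_map_iff]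
    simpa [Function.comp_def, integrableOn_Ici_iff_integrableOn_Ioi] using h_Ioi
  simpa using h_Iic.union h_Ioi

section

variable {p : ℝ}

theorem integrable_exp_neg_abs_mul_abs_rpow (hp : -1 < p) :
    Integrable fun v : ℝ => exp (-|v|) * |v| ^ p :=
  integrable_comp_abs_of_integrableOn_Ioi (f := fun x => exp (-x) * x ^ p) <| by
    simpa using GammaIntegral_convergent (s := p + 1) (by linarith)

theorem integral_exp_neg_abs_mul_abs_rpow (hp : -1 < p) :
    ∫ v : ℝ, exp (-|v|) * |v| ^ p = 2 * Gamma (p + 1) := by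
  rw [integral_comp_abs (f := fun x => exp (-x) * x ^ p), Gamma_eq_integral (by linarith)]
  simp

theorem abs_exp_neg_abs_sub_sub_exp_neg_abs_le (v : ℝ) {s : ℝ} (hs : |s| ≤ 1) :
    |exp (-|v - s|) - exp (-|v|)| ≤ 2 * |s| * exp (-|v|) := by
  have ht : |(|v| - |v - s|)| ≤ |s| := by
    simpa using abs_abs_sub_abs_le_abs_sub v (v - s)
  have hexp : exp (-|v - s|) = exp (-|v|) * exp (|v| - |v - s|) := by
    rw [← exp_add]; ring_nf
  calc |exp (-|v - s|) - exp (-|v|)| = exp (-|v|) * |exp (|v| - |v - s|) - 1| := by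
        rw [hexp, ← mul_sub_one, abs_mul, abs_of_pos (exp_pos _)]
    _ ≤ exp (-|v|) * (2 * |s|) := by
        gcongr
        exact (abs_exp_sub_one_le (ht.trans hs)).trans (by linarith)
    _ = 2 * |s| * exp (-|v|) := by ring

theorem abs_integral_exp_neg_abs_mul_abs_add_rpow_sub_le (hp : -1 < p) {s : ℝ} (hs : |s| ≤ 1) :
    |(∫ v : ℝ, exp (-|v|) * |s + v| ^ p) - 2 * Gamma (p + 1)| ≤ 4 * Gamma (p + 1) * |s| := by
  set g : ℝ → ℝ := fun v => exp (-|v|) * |v| ^ p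
  set h : ℝ → ℝ := fun v => exp (-|v - s|) * |v| ^ p
  have hg : Integrable g := integrable_exp_neg_abs_mul_abs_rpow hp
  have hbound : ∀ v, ‖h v - g v‖ ≤ 2 * |s| * g v := fun v => by
    simp only [h, g, norm_eq_abs, ← sub_mul, abs_mul, abs_of_nonneg (rpow_nonneg (abs_nonneg v) p)]
    rw [← mul_assoc]
    exact mul_le_mul_of_nonneg_right (abs_exp_neg_abs_sub_sub_exp_neg_abs_le v hs)
      (rpow_nonneg (abs_nonneg v) p)
  have hdiff : Integrable fun v => h v - g v :=
    (hg.const_mul (2 * |s|)).mono' (by fun_prop) (ae_of_all _ hbound)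
  have hshift : ∫ v : ℝ, exp (-|v|) * |s + v| ^ p = ∫ v, h v := by
    rw [← integral_add_right_eq_self h s]
    simp [h, add_comm]
  calc |(∫ v : ℝ, exp (-|v|) * |s + v| ^ p) - 2 * Gamma (p + 1)|
      = ‖∫ v, (h v - g v)‖ := by
        rw [hshift, ← integral_exp_neg_abs_mul_abs_rpow hp, integral_sub _ hg, norm_eq_abs]
        exact (hdiff.add hg).congr (ae_of_all _ fun v => sub_add_cancel (h v) (g v))
    _ ≤ ∫ v, 2 * |s| * g v := norm_integral_le_of_norm_le (hg.const_mul _) (ae_of_all _ hbound)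
    _ = 4 * Gamma (p + 1) * |s| := by
        rw [integral_const_mul, integral_exp_neg_abs_mul_abs_rpow hp]; ring

end

theorem isLittleO_rpow_rpow_nhdsGT_zero {p q : ℝ} (hpq : p < q) :
    (fun x : ℝ => x ^ q) =o[𝓝[>] 0] fun x => x ^ p := by
  rw [isLittleO_iff_tendsto' <| by
    filter_upwards [self_mem_nhdsWithin] with x hx h
    exact absurd h (rpow_pos_of_pos hx p).ne']
  have hlim : Tendsto (fun x : ℝ => x ^ (q - p)) (𝓝[>] 0) (𝓝 0) := by
    simpa [zero_rpow (sub_pos.2 hpq).ne'] using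
      ((continuousAt_rpow_const 0 (q - p) (Or.inr (sub_pos.2 hpq).le)).tendsto).mono_left
        nhdsWithin_le_nhds
  refine hlim.congr' ?_
  filter_upwards [self_mem_nhdsWithin] with x hx
  rw [rpow_sub hx]

theorem fouCorr_sub_eq {H : ℝ} (hH : -1 / 2 < H) (s : ℝ) :
    fouCorr H s - (1 - s ^ (2 * H) / Gamma (2 * H + 1)) =
      ((∫ v : ℝ, exp (-|v|) * |s + v| ^ (2 * H)) - 2 * Gamma (2 * H + 1)) /
        (2 * Gamma (2 * H + 1)) := by
  have hΓ := (Gamma_pos_of_pos (by linarith : 0 < 2 * H + 1)).ne'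
  unfold fouCorr
  field_simp
  ring

theorem fouCorr_sub_isBigO {H : ℝ} (hH : -1 / 2 < H) :
    (fun s => fouCorr H s - (1 - s ^ (2 * H) / Gamma (2 * H + 1))) =O[𝓝 0] fun s => s := by
  have hΓ := Gamma_pos_of_pos (by linarith : 0 < 2 * H + 1)
  refine IsBigO.of_bound 2 ?_
  filter_upwards [Metric.closedBall_mem_nhds (0 : ℝ) zero_lt_one] with s hs
  rw [mem_closedBall_zero_iff, norm_eq_abs] at hs
  rw [fouCorr_sub_eq hH, norm_div, norm_eq_abs, norm_eq_abs, norm_eq_abs,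
    abs_of_pos (by positivity : 0 < 2 * Gamma (2 * H + 1)), div_le_iff₀ (by positivity)]
  linarith [abs_integral_exp_neg_abs_mul_abs_add_rpow_sub_le (by linarith : -1 < 2 * H) hs]

/-- for `H ∈ (0,1/2)`, the fOU correlation function satisfies the small-lag
expansion `C_Z(s) = 1 - s^{2H}/Γ(2H+1) + o(s^{2H})` as `s → 0⁺`. -/
theorem fou_correlation_small_lag (H : ℝ) (hH : H ∈ Set.Ioo (0 : ℝ) (1/2)) :
    (fun s : ℝ => fouCorr H s - (1 - s ^ (2 * H) / Real.Gamma (2 * H + 1)))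
      =o[nhdsWithin (0 : ℝ) (Set.Ioi 0)] fun s : ℝ => s ^ (2 * H) := by
  refine ((fouCorr_sub_isBigO (by linarith [hH.1])).mono nhdsWithin_le_nhds).trans_isLittleO ?_
  simpa using isLittleO_rpow_rpow_nhdsGT_zero (q := 1) (by linarith [hH.2] : 2 * H < 1)
end

section
/- The fOU correlation function C_Z(s) satisfies, for H ∈ (0,1/2), the tail expansion C_Z(s) = s^{2H−2}/Γ(2H−1) + o(s^{2H−2}) as s → ∞; in particular C_Z is integrable on (0,∞). -/
/-!
Write `a = 2H`. Since `∫ e^{-|v|} dv = 2` and `v ↦ -v` preserves the weight,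
`Γ(a+1) C_Z(s) = ¼ ∫ e^{-|v|} (|s+v|^a + |s-v|^a - 2 s^a) dv = ¼ s^a ∫ e^{-|v|} φ(v/s) dv`
for `s > 0`, where `φ(x) = |1+x|^a + |1-x|^a - 2` is the symmetric second difference of
`t ↦ |t|^a` at `1`. Two applications of l'Hôpital give `φ(x) / x² → a(a-1)` as `x → 0`, and the
mean value theorem together with a crude bound away from `0` give `|φ(x)| ≤ 12 x²`, so by dominated
convergence `s^{2-a} Γ(a+1) C_Z(s) → ¼ a(a-1) ∫ e^{-|v|} v² dv = a(a-1) = Γ(a+1) / Γ(a-1)`.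
Integrability on `(0, ∞)` follows from continuity of `C_Z` and `a - 2 < -1`.
-/

open MeasureTheory Real Filter Asymptotics Set Topology
open scoped Nat

theorem abs_le_mul_sq_of_hasDerivAt {f f' f'' : ℝ → ℝ} {r C : ℝ}
    (hf : ∀ x ∈ Icc 0 r, HasDerivAt f (f' x) x) (hf' : ∀ x ∈ Icc 0 r, HasDerivAt f' (f'' x) x)
    (h0 : f 0 = 0) (h0' : f' 0 = 0) (hC : ∀ x ∈ Icc 0 r, |f'' x| ≤ C) {x : ℝ}
    (hx : x ∈ Icc 0 r) : |f x| ≤ C * x ^ 2 := by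
  have hC0 : 0 ≤ C := (abs_nonneg _).trans (hC 0 ⟨le_rfl, hx.1.trans hx.2⟩)
  have h0r : (0 : ℝ) ∈ Icc 0 r := ⟨le_rfl, hx.1.trans hx.2⟩
  have hf'_le : ∀ y ∈ Icc 0 x, |f' y| ≤ C * x := fun y hy => by
    have hyr : y ∈ Icc 0 r := ⟨hy.1, hy.2.trans hx.2⟩
    have := Convex.norm_image_sub_le_of_norm_hasDerivWithin_le
      (fun z hz => (hf' z hz).hasDerivWithinAt) hC (convex_Icc 0 r) h0r hyr
    simp only [h0', sub_zero, Real.norm_eq_abs, abs_of_nonneg hy.1] at this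
    exact this.trans (mul_le_mul_of_nonneg_left hy.2 hC0)
  have := Convex.norm_image_sub_le_of_norm_hasDerivWithin_le
    (fun z hz => (hf z ⟨hz.1, hz.2.trans hx.2⟩).hasDerivWithinAt) hf'_le (convex_Icc 0 x)
    ⟨le_rfl, hx.1⟩ ⟨hx.1, le_rfl⟩
  simp only [h0, sub_zero, Real.norm_eq_abs, abs_of_nonneg hx.1] at this
  linarith

theorem tendsto_div_sq_nhdsGT_of_hasDerivAt {f f' f'' : ℝ → ℝ} {r L : ℝ} (hr : 0 < r)
    (hf : ∀ x ∈ Ico 0 r, HasDerivAt f (f' x) x) (hf' : ∀ x ∈ Ico 0 r, HasDerivAt f' (f'' x) x)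
    (h0 : f 0 = 0) (h0' : f' 0 = 0) (hf'' : Tendsto f'' (𝓝[>] 0) (𝓝 L)) :
    Tendsto (fun x => f x / x ^ 2) (𝓝[>] 0) (𝓝 (L / 2)) := by
  have h0r : (0 : ℝ) ∈ Ico 0 r := ⟨le_rfl, hr⟩
  have hnear : ∀ᶠ x in 𝓝[>] (0 : ℝ), x ∈ Ico 0 r :=
    mem_of_superset (Ioo_mem_nhdsGT hr) Ioo_subset_Ico_self
  have hpos : ∀ᶠ x in 𝓝[>] (0 : ℝ), 0 < x := self_mem_nhdsWithin
  have hlim : ∀ {g g' : ℝ → ℝ}, HasDerivAt g (g' 0) 0 → g 0 = 0 →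
      Tendsto g (𝓝[>] 0) (𝓝 0) := fun hg hg0 => by
    simpa only [hg0] using (hg.continuousAt.continuousWithinAt (s := Ioi 0)).tendsto
  refine HasDerivAt.lhopital_zero_nhdsGT (hnear.mono hf)
    (Eventually.of_forall fun x => by simpa using hasDerivAt_pow 2 x)
    (hpos.mono fun x hx => by positivity) (hlim (hf 0 h0r) h0)
    (by simpa using ((continuous_pow 2).tendsto (0 : ℝ)).mono_left nhdsWithin_le_nhds) ?_
  refine HasDerivAt.lhopital_zero_nhdsGT (hnear.mono hf')
    (Eventually.of_forall fun x => by simpa using (hasDerivAt_id x).const_mul (2 : ℝ))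
    (Eventually.of_forall fun x => by norm_num) (hlim (hf' 0 h0r) h0')
    (by simpa using ((continuous_const_mul (2 : ℝ)).tendsto 0).mono_left nhdsWithin_le_nhds) ?_
  simpa [Nat.cast_ofNat] using hf''.div_const 2

theorem rpow_le_one_add {t a : ℝ} (ht : 0 ≤ t) (ha0 : 0 ≤ a) (ha1 : a ≤ 1) : t ^ a ≤ 1 + t := by
  rcases le_total t 1 with h | h
  · linarith [rpow_le_one ht h ha0]
  · linarith [rpow_le_self_of_one_le h ha1]

theorem hasDerivAt_one_add_rpow (b : ℝ) {x : ℝ} (hx : -1 < x) :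
    HasDerivAt (fun y => (1 + y) ^ b) (b * (1 + x) ^ (b - 1)) x := by
  simpa using ((hasDerivAt_id x).const_add 1).rpow_const (p := b)
    (Or.inl (show (0 : ℝ) < 1 + x by linarith).ne')

theorem hasDerivAt_one_sub_rpow (b : ℝ) {x : ℝ} (hx : x < 1) :
    HasDerivAt (fun y => (1 - y) ^ b) (-(b * (1 - x) ^ (b - 1))) x := by
  simpa using ((hasDerivAt_id x).const_sub 1).rpow_const (p := b)
    (Or.inl (show (0 : ℝ) < 1 - x by linarith).ne')

noncomputable def rpowSecondDiff (a x : ℝ) : ℝ := |1 + x| ^ a + |1 - x| ^ a - 2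

theorem rpowSecondDiff_zero (a : ℝ) : rpowSecondDiff a 0 = 0 := by
  norm_num [rpowSecondDiff]

theorem rpowSecondDiff_neg (a x : ℝ) : rpowSecondDiff a (-x) = rpowSecondDiff a x := by
  simp only [rpowSecondDiff, ← sub_eq_add_neg, sub_neg_eq_add]
  ring

theorem rpowSecondDiff_abs (a x : ℝ) : rpowSecondDiff a |x| = rpowSecondDiff a x := by
  rcases abs_cases x with ⟨h, -⟩ | ⟨h, -⟩ <;> simp [h, rpowSecondDiff_neg]

theorem hasDerivAt_rpowSecondDiff (a : ℝ) {x : ℝ} (hx : x ∈ Ioo (-1) 1) :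
    HasDerivAt (rpowSecondDiff a) (a * ((1 + x) ^ (a - 1) - (1 - x) ^ (a - 1))) x := by
  have h := ((hasDerivAt_one_add_rpow a hx.1).add (hasDerivAt_one_sub_rpow a hx.2)).sub_const 2
  refine (h.congr_deriv (by ring)).congr_of_eventuallyEq ?_
  filter_upwards [Ioo_mem_nhds hx.1 hx.2] with y hy
  rw [rpowSecondDiff, abs_of_pos (by linarith [hy.1]), abs_of_pos (by linarith [hy.2])]
  rfl

theorem hasDerivAt_deriv_rpowSecondDiff (a : ℝ) {x : ℝ} (hx : x ∈ Ioo (-1) 1) :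
    HasDerivAt (fun y => a * ((1 + y) ^ (a - 1) - (1 - y) ^ (a - 1)))
      (a * (a - 1) * ((1 + x) ^ (a - 2) + (1 - x) ^ (a - 2))) x := by
  refine (((hasDerivAt_one_add_rpow (a - 1) hx.1).sub
    (hasDerivAt_one_sub_rpow (a - 1) hx.2)).const_mul a).congr_deriv ?_
  rw [show a - 1 - 1 = a - 2 by ring]
  ring

theorem tendsto_rpowSecondDiff_div_sq (a : ℝ) :
    Tendsto (fun x => rpowSecondDiff a x / x ^ 2) (𝓝[>] 0) (𝓝 (a * (a - 1))) := by
  have hsub : Ico (0 : ℝ) 1 ⊆ Ioo (-1) 1 := fun x hx => ⟨by linarith [hx.1], hx.2⟩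
  have hcont : ContinuousAt (fun x => a * (a - 1) * ((1 + x) ^ (a - 2) + (1 - x) ^ (a - 2))) 0 := by
    fun_prop (disch := norm_num)
  have := tendsto_div_sq_nhdsGT_of_hasDerivAt one_pos
    (fun x hx => hasDerivAt_rpowSecondDiff a (hsub hx))
    (fun x hx => hasDerivAt_deriv_rpowSecondDiff a (hsub hx)) (rpowSecondDiff_zero a) (by simp)
    (hcont.continuousWithinAt (s := Ioi 0)).tendsto
  convert this using 2
  norm_num

theorem abs_rpowSecondDiff_le {a : ℝ} (ha0 : 0 ≤ a) (ha1 : a ≤ 1) (x : ℝ) :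
    |rpowSecondDiff a x| ≤ 12 * x ^ 2 := by
  rw [← rpowSecondDiff_abs, ← sq_abs x]
  have hy : 0 ≤ |x| := abs_nonneg x
  set y := |x|
  rcases le_total y (1 / 2) with hy' | hy'
  · have hsub : Icc (0 : ℝ) (1 / 2) ⊆ Ioo (-1) 1 := fun t ht =>
      ⟨by linarith [ht.1], by linarith [ht.2]⟩
    have hC : ∀ t ∈ Icc (0 : ℝ) (1 / 2),
        |a * (a - 1) * ((1 + t) ^ (a - 2) + (1 - t) ^ (a - 2))| ≤ 2 := fun t ht => by
      have h₁ : (1 + t) ^ (a - 2) ≤ 1 :=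
        rpow_le_one_of_one_le_of_nonpos (by linarith [ht.1]) (by linarith)
      have h₂ : (1 - t) ^ (a - 2) ≤ 4 := calc
        (1 - t) ^ (a - 2) ≤ (1 / 2) ^ (a - 2) :=
          rpow_le_rpow_of_nonpos (by norm_num) (by linarith [ht.2]) (by linarith)
        _ ≤ (1 / 2) ^ (-2 : ℝ) :=
          rpow_le_rpow_of_exponent_ge (by norm_num) (by norm_num) (by linarith)
        _ = 4 := by norm_num [rpow_neg]
      have h₃ : |a * (a - 1)| ≤ 1 / 4 := by
        rw [abs_le]; constructor <;> nlinarith [sq_nonneg (a - 1 / 2)]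
      rw [abs_mul, abs_of_nonneg (add_nonneg (rpow_nonneg (by linarith [ht.1]) _)
        (rpow_nonneg (by linarith [ht.2]) _))]
      nlinarith [abs_nonneg (a * (a - 1))]
    have := abs_le_mul_sq_of_hasDerivAt (fun t ht => hasDerivAt_rpowSecondDiff a (hsub ht))
      (fun t ht => hasDerivAt_deriv_rpowSecondDiff a (hsub ht)) (rpowSecondDiff_zero a)
      (by simp) hC ⟨hy, hy'⟩
    nlinarith
  · have h₁ := rpow_le_one_add (abs_nonneg (1 + y)) ha0 ha1
    have h₂ := rpow_le_one_add (abs_nonneg (1 - y)) ha0 ha1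
    have h₃ : 0 ≤ |1 + y| ^ a := by positivity
    have h₄ : 0 ≤ |1 - y| ^ a := by positivity
    have h₅ : |1 - y| ≤ 1 + y := abs_le.mpr ⟨by linarith, by linarith⟩
    rw [rpowSecondDiff, abs_le, abs_of_nonneg (by linarith : 0 ≤ 1 + y)]
    rw [abs_of_nonneg (by linarith : 0 ≤ 1 + y)] at h₁ h₃
    constructor <;> nlinarith

theorem MeasureTheory.IntegrableOn.integrable_comp_abs {f : ℝ → ℝ} (hf : IntegrableOn f (Ioi 0)) :
    Integrable (fun x => f |x|) := by
  have hIoi : IntegrableOn (fun x => f |x|) (Ioi 0) :=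
    hf.congr_fun (fun x hx => by rw [abs_of_pos hx]) measurableSet_Ioi
  have hIic : IntegrableOn (fun x => f |x|) (Iic 0) := by
    have hneg : MeasurableEmbedding fun x : ℝ => -x := (Homeomorph.neg ℝ).measurableEmbedding
    rw [← Measure.map_neg_eq_self (volume : Measure ℝ), hneg.integrableOn_map_iff]
    simpa [Function.comp_def] using (integrableOn_Ici_iff_integrableOn_Ioi).mpr hIoi
  simpa using hIic.union hIoi

theorem integrableOn_exp_neg_mul_pow (n : ℕ) :
    IntegrableOn (fun x : ℝ => exp (-x) * x ^ n) (Ioi 0) := by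
  refine (GammaIntegral_convergent (s := n + 1) (by positivity)).congr_fun
    (fun x _ => ?_) measurableSet_Ioi
  simp [← rpow_natCast]

theorem integral_exp_neg_mul_pow (n : ℕ) :
    ∫ x in Ioi (0 : ℝ), exp (-x) * x ^ n = n ! := by
  rw [← Gamma_nat_eq_factorial, Gamma_eq_integral (by positivity)]
  simp [← rpow_natCast]

theorem integrable_exp_neg_abs_mul_abs_pow (n : ℕ) :
    Integrable (fun v : ℝ => exp (-|v|) * |v| ^ n) :=
  (integrableOn_exp_neg_mul_pow n).integrable_comp_abs

theorem integral_exp_neg_abs_mul_abs_pow (n : ℕ) :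
    ∫ v : ℝ, exp (-|v|) * |v| ^ n = 2 * n ! := by
  rw [integral_comp_abs (f := fun x => exp (-x) * x ^ n), integral_exp_neg_mul_pow]

theorem rpow_abs_add_le {a : ℝ} (ha0 : 0 ≤ a) (ha1 : a ≤ 1) (s v : ℝ) :
    |s + v| ^ a ≤ 1 + |s| + |v| := by
  linarith [rpow_le_one_add (abs_nonneg (s + v)) ha0 ha1, abs_add_le s v]

theorem integrable_exp_neg_abs_mul_add_abs (c : ℝ) :
    Integrable (fun v : ℝ => exp (-|v|) * (c + |v|)) := by
  refine (((integrable_exp_neg_abs_mul_abs_pow 0).const_mul c).add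
    (integrable_exp_neg_abs_mul_abs_pow 1)).congr (ae_of_all _ fun v => ?_)
  simp only [Pi.add_apply, pow_zero, pow_one]
  ring

theorem norm_exp_neg_abs_mul_rpow_abs_add_le {a : ℝ} (ha0 : 0 ≤ a) (ha1 : a ≤ 1) (s v : ℝ) :
    ‖exp (-|v|) * |s + v| ^ a‖ ≤ exp (-|v|) * (1 + |s| + |v|) := by
  rw [norm_mul, norm_of_nonneg (exp_pos _).le, norm_of_nonneg (by positivity)]
  exact mul_le_mul_of_nonneg_left (rpow_abs_add_le ha0 ha1 s v) (exp_pos _).le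

theorem integrable_exp_neg_abs_mul_rpow_abs_add {a : ℝ} (ha0 : 0 ≤ a) (ha1 : a ≤ 1) (s : ℝ) :
    Integrable (fun v : ℝ => exp (-|v|) * |s + v| ^ a) :=
  (integrable_exp_neg_abs_mul_add_abs (1 + |s|)).mono' (by fun_prop)
    (ae_of_all _ (norm_exp_neg_abs_mul_rpow_abs_add_le ha0 ha1 s))

theorem continuous_integral_exp_neg_abs_mul_rpow_abs_add {a : ℝ} (ha0 : 0 ≤ a) (ha1 : a ≤ 1) :
    Continuous fun s : ℝ => ∫ v, exp (-|v|) * |s + v| ^ a := by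
  refine continuous_iff_continuousAt.2 fun s₀ => continuousAt_of_dominated
    (bound := fun v => exp (-|v|) * ((2 + |s₀|) + |v|)) (Eventually.of_forall fun s => by fun_prop)
    ?_ (integrable_exp_neg_abs_mul_add_abs _) (ae_of_all _ fun v => ?_)
  · filter_upwards [Metric.ball_mem_nhds s₀ one_pos] with s hs
    refine ae_of_all _ fun v => (norm_exp_neg_abs_mul_rpow_abs_add_le ha0 ha1 s v).trans ?_
    have : |s| ≤ 1 + |s₀| := by
      linarith [abs_sub_abs_le_abs_sub s s₀, (Real.dist_eq s s₀) ▸ Metric.mem_ball.1 hs]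
    exact mul_le_mul_of_nonneg_left (by linarith) (exp_pos _).le
  · exact continuousAt_const.mul
      ((continuousAt_id.add continuousAt_const).abs.rpow_const (Or.inr ha0))

theorem continuous_fouCorr {H : ℝ} (hH0 : 0 ≤ H) (hH1 : H ≤ 1 / 2) : Continuous (fouCorr H) :=
  continuous_const.mul ((continuous_const.mul
    (continuous_integral_exp_neg_abs_mul_rpow_abs_add (by linarith) (by linarith))).sub
    (continuous_rpow_const (by linarith)))

theorem integral_exp_neg_abs_mul_rpow_abs_add_symm {a : ℝ} (ha0 : 0 ≤ a) (ha1 : a ≤ 1) (s : ℝ) :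
    (1 / 2) * (∫ v, exp (-|v|) * |s + v| ^ a) - s ^ a
      = (1 / 4) * ∫ v, exp (-|v|) * (|s + v| ^ a + |s - v| ^ a - 2 * s ^ a) := by
  have hint := integrable_exp_neg_abs_mul_rpow_abs_add ha0 ha1 s
  have hneg : ∫ v, exp (-|v|) * |s - v| ^ a = ∫ v, exp (-|v|) * |s + v| ^ a := by
    simpa [← sub_eq_add_neg] using integral_neg_eq_self (fun v => exp (-|v|) * |s + v| ^ a) volume
  have hexp : ∫ v : ℝ, exp (-|v|) = 2 := by
    simpa using integral_exp_neg_abs_mul_abs_pow 0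
  have hexp_int : Integrable fun v : ℝ => exp (-|v|) := by
    simpa using integrable_exp_neg_abs_mul_abs_pow 0
  have hint' : Integrable fun v => exp (-|v|) * |s - v| ^ a := by
    simpa [← sub_eq_add_neg] using hint.comp_neg
  have hsum : Integrable fun v => exp (-|v|) * |s + v| ^ a + exp (-|v|) * |s - v| ^ a :=
    hint.add hint'
  simp_rw [mul_sub, mul_add]
  rw [integral_sub hsum (hexp_int.mul_const _), integral_add hint hint', hneg,
    integral_mul_const, hexp]
  ring

theorem rpow_abs_add_add_rpow_abs_sub_sub {s : ℝ} (hs : 0 < s) (a v : ℝ) :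
    |s + v| ^ a + |s - v| ^ a - 2 * s ^ a = s ^ a * rpowSecondDiff a (v / s) := by
  have h : ∀ w, |s + w| ^ a = s ^ a * |1 + w / s| ^ a := fun w => by
    rw [← mul_rpow hs.le (abs_nonneg _), ← abs_of_pos hs, ← abs_mul, abs_of_pos hs,
      mul_add, mul_div_cancel₀ _ hs.ne', mul_one]
  rw [rpowSecondDiff, sub_eq_add_neg s, h, h, neg_div, ← sub_eq_add_neg]
  ring

theorem fouCorr_eq_integral_rpowSecondDiff {H s : ℝ} (hH0 : 0 ≤ H) (hH1 : H ≤ 1 / 2)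
    (hs : 0 < s) :
    fouCorr H s = (4 * Gamma (2 * H + 1))⁻¹ * s ^ (2 * H) *
      ∫ v, exp (-|v|) * rpowSecondDiff (2 * H) (v / s) := by
  rw [fouCorr, integral_exp_neg_abs_mul_rpow_abs_add_symm (by linarith) (by linarith)]
  simp_rw [rpow_abs_add_add_rpow_abs_sub_sub hs, mul_left_comm (exp _), integral_const_mul]
  ring

theorem tendsto_sq_mul_rpowSecondDiff_div (a v : ℝ) :
    Tendsto (fun s => s ^ 2 * rpowSecondDiff a (v / s)) atTop (𝓝 (a * (a - 1) * v ^ 2)) := by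
  rcases eq_or_ne v 0 with rfl | hv
  · simp [rpowSecondDiff_zero]
  have hlim : Tendsto (fun s => |v| / s) atTop (𝓝[>] 0) :=
    tendsto_nhdsWithin_iff.2 ⟨tendsto_const_nhds.div_atTop tendsto_id,
      (eventually_gt_atTop 0).mono fun s hs => div_pos (abs_pos.2 hv) hs⟩
  refine (((tendsto_rpowSecondDiff_div_sq a).comp hlim).mul_const (v ^ 2)).congr' ?_
  filter_upwards [eventually_gt_atTop 0] with s hs
  rw [Function.comp_apply, ← abs_of_pos hs, ← abs_div, rpowSecondDiff_abs, abs_of_pos hs,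
    sq_abs, div_pow]
  field_simp

theorem tendsto_sq_mul_integral_rpowSecondDiff {a : ℝ} (ha0 : 0 ≤ a) (ha1 : a ≤ 1) :
    Tendsto (fun s => s ^ 2 * ∫ v, exp (-|v|) * rpowSecondDiff a (v / s)) atTop
      (𝓝 (4 * (a * (a - 1)))) := by
  have hF : ∀ s : ℝ, s ^ 2 * ∫ v, exp (-|v|) * rpowSecondDiff a (v / s)
      = ∫ v, exp (-|v|) * (s ^ 2 * rpowSecondDiff a (v / s)) := fun s => by
    simp_rw [← integral_const_mul, mul_left_comm]
  have hlimit : ∫ v, exp (-|v|) * (a * (a - 1) * v ^ 2) = 4 * (a * (a - 1)) := by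
    have h2 : ∫ v : ℝ, exp (-|v|) * v ^ 2 = 2 * 2 := by
      simpa [sq_abs] using integral_exp_neg_abs_mul_abs_pow 2
    simp_rw [mul_left_comm (exp _), integral_const_mul, h2]
    ring
  simp_rw [hF, ← hlimit]
  refine tendsto_integral_filter_of_dominated_convergence (fun v => exp (-|v|) * (12 * |v| ^ 2))
    (Eventually.of_forall fun s => by unfold rpowSecondDiff; fun_prop) ?_
    (by simpa [mul_left_comm] using (integrable_exp_neg_abs_mul_abs_pow 2).const_mul 12)
    (ae_of_all _ fun v => (tendsto_sq_mul_rpowSecondDiff_div a v).const_mul _)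
  filter_upwards [eventually_gt_atTop 0] with s hs
  refine ae_of_all _ fun v => ?_
  rw [norm_mul, norm_of_nonneg (exp_pos _).le, norm_mul, norm_of_nonneg (sq_nonneg s)]
  refine mul_le_mul_of_nonneg_left ?_ (exp_pos _).le
  calc s ^ 2 * ‖rpowSecondDiff a (v / s)‖ ≤ s ^ 2 * (12 * (v / s) ^ 2) :=
        mul_le_mul_of_nonneg_left (abs_rpowSecondDiff_le ha0 ha1 _) (sq_nonneg s)
    _ = 12 * |v| ^ 2 := by field_simp; rw [sq_abs]

theorem Gamma_add_one_eq_mul_Gamma_sub_one {a : ℝ} (ha0 : a ≠ 0) (ha1 : a ≠ 1) :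
    Gamma (a + 1) = a * (a - 1) * Gamma (a - 1) := by
  have h := Gamma_add_one (sub_ne_zero.2 ha1)
  rw [sub_add_cancel] at h
  rw [Gamma_add_one ha0, h]
  ring

theorem tendsto_fouCorr_div_rpow {H : ℝ} (hH0 : 0 < H) (hH1 : H < 1 / 2) :
    Tendsto (fun s => fouCorr H s / s ^ (2 * H - 2)) atTop (𝓝 (Gamma (2 * H - 1))⁻¹) := by
  have hΓ : Gamma (2 * H + 1) = 2 * H * (2 * H - 1) * Gamma (2 * H - 1) :=
    Gamma_add_one_eq_mul_Gamma_sub_one (by linarith) (by linarith)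
  have hlim := (tendsto_sq_mul_integral_rpowSecondDiff (a := 2 * H) (by linarith)
    (by linarith)).const_mul (4 * Gamma (2 * H + 1))⁻¹
  rw [show (4 * Gamma (2 * H + 1))⁻¹ * (4 * (2 * H * (2 * H - 1))) = (Gamma (2 * H - 1))⁻¹ by
    rw [hΓ]
    field_simp [show 2 * H - 1 ≠ 0 by linarith]] at hlim
  refine hlim.congr' ?_
  filter_upwards [eventually_gt_atTop 0] with s hs
  rw [fouCorr_eq_integral_rpowSecondDiff hH0.le hH1.le hs, mul_div_right_comm, mul_div_assoc,
    ← rpow_sub hs, show 2 * H - (2 * H - 2) = (2 : ℕ) by ring, rpow_natCast]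
  ring

/-- for `H ∈ (0,1/2)`, the fOU correlation function satisfies the tail
expansion `C_Z(s) = s^{2H-2}/Γ(2H-1) + o(s^{2H-2})` as `s → ∞`; in particular it is
integrable on `(0,∞)`. -/
theorem fou_correlation_tail (H : ℝ) (hH : H ∈ Set.Ioo (0 : ℝ) (1/2)) :
    ((fun s : ℝ => fouCorr H s - s ^ (2 * H - 2) / Real.Gamma (2 * H - 1))
        =o[atTop] fun s : ℝ => s ^ (2 * H - 2)) ∧
      IntegrableOn (fouCorr H) (Set.Ioi (0 : ℝ)) := by
  obtain ⟨hH0, hH1⟩ := hH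
  have hlim := tendsto_fouCorr_div_rpow hH0 hH1
  have hne : ∀ᶠ s : ℝ in atTop, s ^ (2 * H - 2) ≠ 0 :=
    (eventually_gt_atTop 0).mono fun s hs => (rpow_pos_of_pos hs _).ne'
  constructor
  · refine (isLittleO_iff_tendsto' (hne.mono fun s hs h => absurd h hs)).2 ?_
    have h := hlim.sub_const (Gamma (2 * H - 1))⁻¹
    rw [sub_self] at h
    refine h.congr' ?_
    filter_upwards [hne] with s hs
    rw [sub_div, div_right_comm, div_self hs, one_div]
  · have hO := isBigO_of_div_tendsto_nhds (hne.mono fun s hs h => absurd h hs) _ hlim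
    exact (continuous_fouCorr hH0.le hH1.le).locallyIntegrable.locallyIntegrableOn (Ici 0)
      |>.integrableOn_of_isBigO_atTop hO (integrableAtFilter_rpow_atTop_iff.2 (by linarith))
      |>.mono_set Ioi_subset_Ici_self
end

section
/- Let f: ℝ → ℝ be smooth with bounded derivative, and let Z^ε_t be as in the moving-average Gaussian model. Then Var(E[f(Z^ε_t) | F_0]) ≤ ‖f'‖_∞² σ_z² ∫_t^∞ K^ε(u)² du. -/
open MeasureTheory ProbabilityTheory Real Set Filter
open scoped NNReal ENNReal

lemma integrable_sq_mul_exp_neg_mul_sq {b : ℝ} (hb : 0 < b) :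
    Integrable (fun x : ℝ => x ^ 2 * Real.exp (-b * x ^ 2)) := by
  have h := integrable_rpow_mul_exp_neg_mul_sq hb (s := (2:ℝ)) (by norm_num)
  have h2 : (fun x : ℝ => x ^ (2:ℝ) * Real.exp (-b * x ^ 2))
      = fun x : ℝ => x ^ 2 * Real.exp (-b * x ^ 2) := by
    ext x
    congr 1
    rw [show (2:ℝ) = ((2:ℕ):ℝ) by norm_num, Real.rpow_natCast]
  rwa [h2] at h

lemma integral_Ioi_sq_mul_exp_neg_mul_sq {b : ℝ} (hb : 0 < b) :
    ∫ x in Ioi (0:ℝ), x ^ 2 * Real.exp (-b * x ^ 2)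
      = (2 * b)⁻¹ * (Real.sqrt (π / b) / 2) := by
  set F : ℝ → ℝ := fun x => -(2 * b)⁻¹ * (x * Real.exp (-b * x ^ 2)) with hF
  have hderiv : ∀ x ∈ Ici (0:ℝ),
      HasDerivAt F (x ^ 2 * Real.exp (-b * x ^ 2) - (2 * b)⁻¹ * Real.exp (-b * x ^ 2)) x := by
    intro x _
    have h1 : HasDerivAt (fun y : ℝ => -b * y ^ 2) (-b * (2 * x)) x := by
      simpa using ((hasDerivAt_pow 2 x).const_mul (-b))
    have h2 : HasDerivAt (fun y : ℝ => Real.exp (-b * y ^ 2))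
        (-b * (2 * x) * Real.exp (-b * x ^ 2)) x := by
      simpa [mul_comm] using h1.exp
    have h3 : HasDerivAt (fun y : ℝ => y * Real.exp (-b * y ^ 2))
        (Real.exp (-b * x ^ 2) + x * (-b * (2 * x) * Real.exp (-b * x ^ 2))) x := by
      exact ((hasDerivAt_id' x).mul h2).congr_deriv (by ring)
    have h4 := h3.const_mul (-(2 * b)⁻¹)
    refine h4.congr_deriv ?_
    have hb' : b ≠ 0 := ne_of_gt hb
    have hb2 : (2 * b)⁻¹ * b = 1 / 2 := by field_simp
    linear_combination (2 * x ^ 2 * Real.exp (-b * x ^ 2)) * hb2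
  have hint : IntegrableOn (fun x : ℝ =>
      x ^ 2 * Real.exp (-b * x ^ 2) - (2 * b)⁻¹ * Real.exp (-b * x ^ 2)) (Ioi (0:ℝ)) :=
    ((integrable_sq_mul_exp_neg_mul_sq hb).sub
      ((integrable_exp_neg_mul_sq hb).const_mul _)).integrableOn
  have htend : Tendsto F atTop (nhds 0) := by
    have h0 : Tendsto (fun x : ℝ => x * Real.exp (-b * x ^ 2)) atTop (nhds 0) := by
      have := (rpow_mul_exp_neg_mul_sq_isLittleO_exp_neg hb 1).trans_tendsto ?_
      · refine this.congr' ?_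
        filter_upwards [eventually_gt_atTop (0:ℝ)] with x hx
        rw [Real.rpow_one]
      · have : Tendsto (fun x : ℝ => -(1/2) * x) atTop atBot := by
          apply Tendsto.const_mul_atTop_of_neg (by norm_num) tendsto_id
        exact Real.tendsto_exp_atBot.comp this
    have h1 := h0.const_mul (-(2 * b)⁻¹)
    rw [mul_zero] at h1
    rw [hF]
    exact h1
  have key := integral_Ioi_of_hasDerivAt_of_tendsto' hderiv hint htend
  have hF0 : F 0 = 0 := by simp [hF]
  rw [hF0, sub_zero] at key
  have hsub := integral_sub
      ((integrable_sq_mul_exp_neg_mul_sq hb).integrableOn (s := Ioi (0:ℝ)))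
      (((integrable_exp_neg_mul_sq hb).const_mul ((2*b)⁻¹)).integrableOn (s := Ioi (0:ℝ)))
  rw [hsub] at key
  have hgauss : ∫ x in Ioi (0:ℝ), (2 * b)⁻¹ * Real.exp (-b * x ^ 2)
      = (2 * b)⁻¹ * (Real.sqrt (π / b) / 2) := by
    rw [integral_const_mul, integral_gaussian_Ioi]
  linarith [key, hgauss]

lemma integral_sq_mul_exp_neg_mul_sq {b : ℝ} (hb : 0 < b) :
    ∫ x : ℝ, x ^ 2 * Real.exp (-b * x ^ 2) = (2 * b)⁻¹ * Real.sqrt (π / b) := by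
  have hI := (integrable_sq_mul_exp_neg_mul_sq hb)
  have heven : ∫ x in Iic (0:ℝ), x ^ 2 * Real.exp (-b * x ^ 2)
      = ∫ x in Ioi (0:ℝ), x ^ 2 * Real.exp (-b * x ^ 2) := by
    have h := (Measure.measurePreserving_neg (volume : Measure ℝ)).setIntegral_preimage_emb
      (Homeomorph.neg ℝ).measurableEmbedding
      (fun x : ℝ => x ^ 2 * Real.exp (-b * x ^ 2)) (Iic 0)
    rw [← h]
    have : (Neg.neg ⁻¹' Iic (0:ℝ)) = Ici (0:ℝ) := by
      ext x; simp
    rw [this, integral_Ici_eq_integral_Ioi]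
    apply setIntegral_congr_fun measurableSet_Ioi
    intro x _
    simp [neg_sq]
  rw [← intervalIntegral.integral_Iic_add_Ioi hI.integrableOn hI.integrableOn, heven,
    integral_Ioi_sq_mul_exp_neg_mul_sq hb]
  ring

open scoped NNReal ENNReal

lemma gaussianPDFReal_zero_eq (v : ℝ≥0) (x : ℝ) :
    ProbabilityTheory.gaussianPDFReal 0 v x
      = (Real.sqrt (2 * π * v))⁻¹ * Real.exp (-(2 * (v:ℝ))⁻¹ * x ^ 2) := by
  rw [gaussianPDFReal_def]
  simp only [sub_zero]
  congr 1
  rw [div_eq_mul_inv]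
  ring

lemma gaussianReal_integral_eq (v : ℝ≥0) (hv : v ≠ 0) (g : ℝ → ℝ) :
    ∫ x, g x ∂(gaussianReal 0 v)
      = ∫ x, ProbabilityTheory.gaussianPDFReal 0 v x * g x := by
  rw [gaussianReal_of_var_ne_zero 0 hv]
  have hd : (ProbabilityTheory.gaussianPDF 0 v)
      = fun x => ((ProbabilityTheory.gaussianPDFReal 0 v x).toNNReal : ℝ≥0∞) := by
    ext x
    rw [gaussianPDF_def]
    rfl
  rw [hd, integral_withDensity_eq_integral_smul
    ((stronglyMeasurable_gaussianPDFReal 0 v).measurable.real_toNNReal) g]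
  congr 1
  ext x
  rw [NNReal.smul_def, Real.coe_toNNReal _ (gaussianPDFReal_nonneg 0 v x)]
  rfl

lemma gaussianReal_integrable_sq (v : ℝ≥0) :
    Integrable (fun x : ℝ => x ^ 2) (gaussianReal 0 v) := by
  by_cases hv : v = 0
  · rw [hv, gaussianReal_zero_var]
    have hae : (fun _ : ℝ => (0:ℝ)) =ᵐ[Measure.dirac (0:ℝ)] fun x => x ^ 2 := by
      rw [ae_dirac_eq]
      simp [Filter.EventuallyEq]
    exact (integrable_const 0).congr hae
  · rw [gaussianReal_of_var_ne_zero 0 hv]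
    have hd : (ProbabilityTheory.gaussianPDF 0 v)
        = fun x => ((ProbabilityTheory.gaussianPDFReal 0 v x).toNNReal : ℝ≥0∞) := by
      ext x; rw [gaussianPDF_def]; rfl
    rw [hd, integrable_withDensity_iff_integrable_smul
      ((stronglyMeasurable_gaussianPDFReal 0 v).measurable.real_toNNReal)]
    have hb : 0 < (2 * (v:ℝ))⁻¹ := by positivity
    have : Integrable (fun x : ℝ =>
        (Real.sqrt (2 * π * v))⁻¹ * (x ^ 2 * Real.exp (-(2 * (v:ℝ))⁻¹ * x ^ 2))) :=
      (integrable_sq_mul_exp_neg_mul_sq hb).const_mul _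
    refine this.congr (Filter.Eventually.of_forall fun x => ?_)
    have hnn := Real.coe_toNNReal _ (gaussianPDFReal_nonneg 0 v x)
    simp only [NNReal.smul_def, smul_eq_mul]
    rw [hnn, gaussianPDFReal_zero_eq]
    ring

lemma gaussianReal_integral_sq (v : ℝ≥0) :
    ∫ x, x ^ 2 ∂(gaussianReal 0 v) = v := by
  by_cases hv : v = 0
  · rw [hv, gaussianReal_zero_var]
    simp
  · rw [gaussianReal_integral_eq v hv]
    have hvpos : (0:ℝ) < v := lt_of_le_of_ne v.coe_nonneg (by exact_mod_cast (Ne.symm hv))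
    have hb : 0 < (2 * (v:ℝ))⁻¹ := by positivity
    have hcalc : ∫ x : ℝ, ProbabilityTheory.gaussianPDFReal 0 v x * x ^ 2
        = (Real.sqrt (2 * π * v))⁻¹
            * ((2 * (2 * (v:ℝ))⁻¹)⁻¹ * Real.sqrt (π / (2 * (v:ℝ))⁻¹)) := by
      rw [← integral_sq_mul_exp_neg_mul_sq hb, ← integral_const_mul]
      congr 1
      ext x
      rw [gaussianPDFReal_zero_eq]
      ring
    rw [hcalc]
    have h1 : (2 * (2 * (v:ℝ))⁻¹)⁻¹ = v := by
      field_simp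
    have h2 : Real.sqrt (π / (2 * (v:ℝ))⁻¹) = Real.sqrt (2 * π * v) := by
      congr 1
      field_simp
    rw [h1, h2]
    have h3 : Real.sqrt (2 * π * v) ≠ 0 := by
      refine ne_of_gt (Real.sqrt_pos.mpr ?_)
      positivity
    field_simp



/-- Lemma A.1: for the moving-average Gaussian model
`Z^ε_t = σ_z ∫_{-∞}^t K^ε(t-u) dW_u`, `K^ε(t) = ε^{-1/2} K(t/ε)`, decomposed as `Z = A + B`
with `A = E[Z^ε_t | F₀]` the `F₀`-measurable part (a centered Gaussian of variance
`σ_{t,∞}² = σ_z² ∫_t^∞ K^ε(u)² du`) and `B` an independent centered Gaussian of variance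
`σ_{0,t}² = σ_z² ∫_0^t K^ε(u)² du`, and for `f` smooth with bounded derivative,
`Var(E[f(Z^ε_t) | F₀]) ≤ ‖f'‖_∞² σ_z² ∫_t^∞ K^ε(u)² du`. -/
theorem var_condexp_bound
    {Ω : Type*} (m₀ : MeasurableSpace Ω) {mΩ : MeasurableSpace Ω} (hm₀ : m₀ ≤ mΩ)
    (P : Measure Ω) [IsProbabilityMeasure P]
    (K : ℝ → ℝ) (σz ε t : ℝ) (hσz : 0 < σz) (hε : 0 < ε) (ht : 0 < t)
    (hK2 : IntegrableOn (fun u => K u ^ 2) (Set.Ioi (0 : ℝ)))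
    (f : ℝ → ℝ) (hf : ContDiff ℝ (⊤ : ℕ∞) f) (M : ℝ) (hM : ∀ x : ℝ, |deriv f x| ≤ M)
    (Z A B : Ω → ℝ)
    (hdecomp : ∀ ω, Z ω = A ω + B ω)
    (hA : Measurable[m₀] A)
    (hAlaw : Measure.map A P
      = ProbabilityTheory.gaussianReal 0
          (Real.toNNReal (σz ^ 2 * ∫ u in Set.Ioi t, ε⁻¹ * K (u / ε) ^ 2)))
    (hBlaw : Measure.map B P
      = ProbabilityTheory.gaussianReal 0
          (Real.toNNReal (σz ^ 2 * ∫ u in Set.Ioc (0 : ℝ) t, ε⁻¹ * K (u / ε) ^ 2)))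
    (hBindep : ProbabilityTheory.Indep (MeasurableSpace.comap B inferInstance) m₀ P) :
    ProbabilityTheory.variance (P[fun ω => f (Z ω)|m₀]) P
      ≤ M ^ 2 * (σz ^ 2 * ∫ u in Set.Ioi t, ε⁻¹ * K (u / ε) ^ 2) := by
  set v : ℝ := σz ^ 2 * ∫ u in Set.Ioi t, ε⁻¹ * K (u / ε) ^ 2 with hvdef
  have hv0 : 0 ≤ v := by
    apply mul_nonneg (sq_nonneg σz)
    apply setIntegral_nonneg measurableSet_Ioi
    intro u _
    positivity
  have hAm : Measurable A := hA.mono hm₀ le_rfl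
  have hBaem : AEMeasurable B P := by
    by_contra h
    have h0 : Measure.map B P = 0 := Measure.map_of_not_aemeasurable h
    have h1 := congrArg (fun μ : Measure ℝ => μ Set.univ) (h0.symm.trans hBlaw)
    simp [measure_univ] at h1
  -- moments of A and B
  have hA2 : MemLp A 2 P := by
    have hid2 : MemLp id 2 (Measure.map A P) := by
      rw [hAlaw]
      exact (memLp_two_iff_integrable_sq measurable_id.aestronglyMeasurable).mpr
        (gaussianReal_integrable_sq _)
    simpa using
      (memLp_map_measure_iff measurable_id.aestronglyMeasurable hAm.aemeasurable).mp hid2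
  have hAsq : ∫ ω, (A ω) ^ 2 ∂P = v := by
    have h1 : ∫ x, x ^ 2 ∂(Measure.map A P) = ∫ ω, (A ω) ^ 2 ∂P :=
      integral_map hAm.aemeasurable
        ((measurable_id.pow_const 2).aestronglyMeasurable)
    rw [← h1, hAlaw, gaussianReal_integral_sq, Real.coe_toNNReal _ hv0]
  have hAint : Integrable A P := hA2.integrable one_le_two
  have hB2 : MemLp B 2 P := by
    have hid2 : MemLp id 2 (Measure.map B P) := by
      rw [hBlaw]
      exact (memLp_two_iff_integrable_sq measurable_id.aestronglyMeasurable).mpr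
        (gaussianReal_integrable_sq _)
    simpa using
      (memLp_map_measure_iff measurable_id.aestronglyMeasurable hBaem).mp hid2
  have hBint : Integrable B P := hB2.integrable one_le_two
  -- Lipschitz bound for f
  have hM0 : 0 ≤ M := le_trans (abs_nonneg _) (hM 0)
  have hlip : LipschitzWith ⟨M, hM0⟩ f := by
    apply lipschitzWith_of_nnnorm_deriv_le (hf.differentiable (by simp))
    intro x
    apply NNReal.coe_le_coe.mp
    exact (show ‖deriv f x‖ ≤ M by simpa [Real.norm_eq_abs] using hM x)
  have hlipM : ∀ a b : ℝ, |f a - f b| ≤ M * |a - b| := by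
    intro a b
    have h := hlip.dist_le_mul a b
    rw [Real.dist_eq, Real.dist_eq] at h; exact h
  -- integrability of f∘Z and f∘B
  have hZaesm : AEStronglyMeasurable Z P := by
    have hZA : Z = fun ω => A ω + B ω := funext hdecomp
    rw [hZA]
    exact (hAm.aemeasurable.add hBaem).aestronglyMeasurable
  have hfZsm : AEStronglyMeasurable (fun ω => f (Z ω)) P :=
    hf.continuous.comp_aestronglyMeasurable hZaesm
  have hfBsm : AEStronglyMeasurable (fun ω => f (B ω)) P :=
    hf.continuous.comp_aestronglyMeasurable hBaem.aestronglyMeasurable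
  have hfZint : Integrable (fun ω => f (Z ω)) P := by
    refine Integrable.mono'
      (g := fun ω => |f 0| + (M * |A ω| + M * |B ω|)) ?_ hfZsm
      (Filter.Eventually.of_forall fun ω => ?_)
    · exact (integrable_const (|f 0|)).add ((hAint.abs.const_mul M).add (hBint.abs.const_mul M))
    · have h1 : |f (Z ω) - f 0| ≤ M * |Z ω - 0| := hlipM _ _
      rw [sub_zero] at h1
      have h2 : |Z ω| ≤ |A ω| + |B ω| := by rw [hdecomp]; exact abs_add_le _ _
      have h3 : M * |Z ω| ≤ M * (|A ω| + |B ω|) := mul_le_mul_of_nonneg_left h2 hM0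
      have h4 : |f (Z ω)| ≤ |f 0| + |f (Z ω) - f 0| := by
        have := abs_add_le (f 0) (f (Z ω) - f 0)
        simpa using this
      rw [Real.norm_eq_abs]
      calc |f (Z ω)| ≤ |f 0| + |f (Z ω) - f 0| := h4
        _ ≤ |f 0| + (M * |A ω| + M * |B ω|) := by
            refine add_le_add le_rfl ?_
            calc |f (Z ω) - f 0| ≤ M * |Z ω| := h1
              _ ≤ M * (|A ω| + |B ω|) := h3
              _ = M * |A ω| + M * |B ω| := by ring
  have hfBint : Integrable (fun ω => f (B ω)) P := by
    refine Integrable.mono'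
      (g := fun ω => |f 0| + M * |B ω|) ?_ hfBsm
      (Filter.Eventually.of_forall fun ω => ?_)
    · exact (integrable_const (|f 0|)).add (hBint.abs.const_mul M)
    · have h1 : |f (B ω) - f 0| ≤ M * |B ω - 0| := hlipM _ _
      rw [sub_zero] at h1
      have h4 : |f (B ω)| ≤ |f 0| + |f (B ω) - f 0| := by
        have := abs_add_le (f 0) (f (B ω) - f 0)
        simpa using this
      show |f (B ω)| ≤ |f 0| + M * |B ω|
      linarith
  haveI : IsFiniteMeasure (P.trim hm₀) := isFiniteMeasure_trim hm₀
  -- conditional expectation of f∘B is constant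
  set c : ℝ := ∫ ω, f (B ω) ∂P with hcdef
  have hcondB : P[(fun ω => f (B ω))|m₀] =ᵐ[P] fun _ => c := by
    obtain ⟨B', hB'meas, hBB'⟩ := hBaem
    have hfBB' : (fun ω => f (B ω)) =ᵐ[P] fun ω => f (B' ω) :=
      hBB'.mono fun ω h => by simp only [h]
    have hindep' : ProbabilityTheory.Indep (MeasurableSpace.comap B' inferInstance) m₀ P := by
      rw [ProbabilityTheory.Indep_iff] at hBindep ⊢
      intro s t hs ht
      obtain ⟨E, hE, rfl⟩ := hs
      have hset : (B' ⁻¹' E : Set Ω) =ᵐ[P] (B ⁻¹' E : Set Ω) := by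
        filter_upwards [hBB'] with ω hω
        show (B' ω ∈ E) = (B ω ∈ E)
        rw [hω]
      have h1 : P (B' ⁻¹' E ∩ t) = P (B ⁻¹' E ∩ t) :=
        measure_congr (MeasureTheory.ae_eq_set_inter hset (Filter.EventuallyEq.refl _ _))
      have h2 : P (B' ⁻¹' E) = P (B ⁻¹' E) := measure_congr hset
      rw [h1, h2]
      exact hBindep _ t ⟨E, hE, rfl⟩ ht
    have hfB'sm : StronglyMeasurable[MeasurableSpace.comap B' inferInstance]
        (fun ω => f (B' ω)) :=
      (hf.continuous.measurable.comp (Measurable.of_comap_le le_rfl)).stronglyMeasurable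
    have h3 : P[(fun ω => f (B' ω))|m₀] =ᵐ[P] fun _ => ∫ ω, f (B' ω) ∂P :=
      condExp_indep_eq hB'meas.comap_le hm₀ hfB'sm hindep'
    have h4 : ∫ ω, f (B' ω) ∂P = c := (integral_congr_ae hfBB').symm
    calc P[(fun ω => f (B ω))|m₀]
        =ᵐ[P] P[(fun ω => f (B' ω))|m₀] := condExp_congr_ae hfBB'
      _ =ᵐ[P] fun _ => ∫ ω, f (B' ω) ∂P := h3
      _ = fun _ => c := by rw [h4]
  -- |E[f∘Z|m₀] - c| ≤ M |A| a.e.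
  set X : Ω → ℝ := P[fun ω => f (Z ω)|m₀] with hXdef
  have hGdef : (fun ω => f (Z ω)) - (fun ω => f (B ω)) = fun ω => f (Z ω) - f (B ω) := rfl
  have hgint : Integrable (fun ω => f (Z ω) - f (B ω)) P := hfZint.sub hfBint
  have hhint : Integrable (fun ω => M * |A ω|) P := hAint.abs.const_mul M
  have hhcont : Continuous fun x : ℝ => M * |x| := continuous_const.mul continuous_abs
  have hhm : Measurable[m₀] fun ω => M * |A ω| := hhcont.measurable.comp hA
  have hhsm : StronglyMeasurable[m₀] (fun ω => M * |A ω|) := hhm.stronglyMeasurable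
  have hcondh : P[(fun ω => M * |A ω|)|m₀] = fun ω => M * |A ω| :=
    condExp_of_stronglyMeasurable hm₀ hhsm hhint
  have hptub : ∀ ω, f (Z ω) - f (B ω) ≤ M * |A ω| := by
    intro ω
    have h1 : |f (Z ω) - f (B ω)| ≤ M * |Z ω - B ω| := hlipM _ _
    have h2 : Z ω - B ω = A ω := by rw [hdecomp]; ring
    rw [h2] at h1
    exact le_trans (le_abs_self _) h1
  have hptlb : ∀ ω, -(M * |A ω|) ≤ f (Z ω) - f (B ω) := by
    intro ω
    have h1 : |f (Z ω) - f (B ω)| ≤ M * |Z ω - B ω| := hlipM _ _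
    have h2 : Z ω - B ω = A ω := by rw [hdecomp]; ring
    rw [h2] at h1
    have := neg_abs_le (f (Z ω) - f (B ω))
    linarith
  have hub := condExp_mono (m := m₀) hgint hhint (Filter.Eventually.of_forall hptub)
  have hlb := condExp_mono (m := m₀) hhint.neg hgint
    (Filter.Eventually.of_forall fun ω => hptlb ω)
  have hsub : P[(fun ω => f (Z ω) - f (B ω))|m₀]
      =ᵐ[P] P[fun ω => f (Z ω)|m₀] - P[fun ω => f (B ω)|m₀] := by
    rw [← hGdef]
    exact condExp_sub hfZint hfBint m₀
  have hnegh := condExp_neg (μ := P) (m := m₀) (fun ω => M * |A ω|)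
  have habs : ∀ᵐ ω ∂P, |X ω - c| ≤ M * |A ω| := by
    filter_upwards [hub, hlb, hsub, hcondB, hnegh] with ω h1 h2 h3 h4 h5
    rw [hcondh] at h1
    rw [h5, hcondh] at h2
    rw [h3] at h1 h2
    simp only [Pi.sub_apply, Pi.neg_apply] at h1 h2
    rw [h4] at h1 h2
    rw [abs_le]
    constructor <;> [linarith; linarith]
  -- X ∈ L²
  have hXsm : AEStronglyMeasurable X P :=
    (stronglyMeasurable_condExp.mono hm₀).aestronglyMeasurable
  have hX2 : MemLp X 2 P := by
    have hbd : MemLp (fun ω => M * |A ω| + |c|) 2 P :=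
      ((hA2.abs.const_mul M).add (memLp_const (|c|)))
    refine MemLp.of_le hbd hXsm ?_
    filter_upwards [habs] with ω hω
    have h1 : |X ω| ≤ |X ω - c| + |c| := by
      have := abs_add_le (X ω - c) c
      simpa using this
    have h2 : 0 ≤ M * |A ω| + |c| := by positivity
    rw [Real.norm_eq_abs, Real.norm_eq_abs, abs_of_nonneg h2]
    linarith
  have hXint : Integrable X P := hX2.integrable one_le_two
  have hXsq : Integrable (fun ω => (X ω) ^ 2) P := hX2.integrable_sq
  have hXc2 : Integrable (fun ω => (X ω - c) ^ 2) P := by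
    have h := (hX2.sub (memLp_const c)).integrable_sq
    refine h.congr (Filter.Eventually.of_forall fun ω => ?_)
    simp [Pi.sub_apply]
  -- variance bound
  have hvar : ProbabilityTheory.variance X P ≤ ∫ ω, (X ω - c) ^ 2 ∂P := by
    rw [ProbabilityTheory.variance_eq_sub hX2]
    have hexpand : ∫ ω, (X ω - c) ^ 2 ∂P
        = (∫ ω, (X ω) ^ 2 ∂P) - 2 * c * (∫ ω, X ω ∂P) + c ^ 2 := by
      have heq : (fun ω => (X ω - c) ^ 2)
          = fun ω => ((X ω) ^ 2 - 2 * c * X ω) + c ^ 2 := by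
        ext ω; ring
      have hi2 : Integrable (fun ω => 2 * c * X ω) P := hXint.const_mul (2 * c)
      have hi1 : Integrable (fun ω => X ω ^ 2 - 2 * c * X ω) P := hXsq.sub hi2
      rw [heq, integral_add hi1 (integrable_const _), integral_sub hXsq hi2,
        integral_const_mul, integral_const]
      simp [measure_univ]
    have hsq : ∫ ω, (X ^ 2) ω ∂P = ∫ ω, (X ω) ^ 2 ∂P := by
      apply integral_congr_ae
      filter_upwards with ω
      simp [Pi.pow_apply]
    rw [hsq]
    nlinarith [sq_nonneg ((∫ ω, X ω ∂P) - c)]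
  have hstep : ∫ ω, (X ω - c) ^ 2 ∂P ≤ ∫ ω, M ^ 2 * (A ω) ^ 2 ∂P := by
    refine integral_mono_ae hXc2 (hA2.integrable_sq.const_mul (M ^ 2)) ?_
    filter_upwards [habs] with ω hω
    have h := abs_le.mp hω
    have h1 : (X ω - c) ^ 2 ≤ (M * |A ω|) ^ 2 := sq_le_sq' h.1 h.2
    calc (X ω - c) ^ 2 ≤ (M * |A ω|) ^ 2 := h1
      _ = M ^ 2 * (A ω) ^ 2 := by rw [mul_pow, sq_abs]
  have hfinal : ∫ ω, M ^ 2 * (A ω) ^ 2 ∂P = M ^ 2 * v := by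
    rw [integral_const_mul, hAsq]
  linarith
end
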